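/- Let $A$ be a free dg associative algebra and $A\langle y_0 \rangle$ the dg algebra obtained by freely adjoining one generator $y_0$ with $d(y_0) \in A$. Then the sets of Maurer-Cartan elements agree: $\mathrm{MC}(A\langle y_0\rangle) = \mathrm{MC}(A)$, i.e. every degree $1$ element $\xi \in A\langle y_0\rangle$ with $d\xi + \xi^2 = 0$ lies in $A$. -/

import Mathlib

/-!
Map `y ↦ C y * X ^ wt y` into polynomials over the free algebra: the coefficients of the image
of `b` are the weight-homogeneous components of `b`, and evaluating at `1` gives `b` back.
Give `y₀` weight `1` and the generators of `A` weight `0`. A graded derivation sending every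
generator into `A` does not raise the weight. If `ξ` has top weight `n`, then `ξ²` has top weight
`2n` (a free algebra has no zero divisors), while `dξ = -ξ²` has weight at most `n`; so `n = 0`
and `ξ` lies in `A`.
-/

noncomputable section

/-- The grading of a free associative algebra by the total degree of words,
where the generator `y` has degree `degY y`. -/
def freeGrading (k Y : Type) [Field k] (degY : Y → ℤ) (n : ℤ) :
    Submodule k (FreeAlgebra k Y) :=
  Submodule.span k {b | ∃ w : List Y,
    (w.map (FreeAlgebra.ι k)).prod = b ∧ (w.map degY).sum = n}

open Polynomial

section Grading

variable {k Y : Type} [Field k]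

theorem one_mem_freeGrading_zero (deg : Y → ℤ) :
    (1 : FreeAlgebra k Y) ∈ freeGrading k Y deg 0 :=
  Submodule.subset_span ⟨[], by simp, by simp⟩

theorem ι_mem_freeGrading (deg : Y → ℤ) (y : Y) :
    FreeAlgebra.ι k y ∈ freeGrading k Y deg (deg y) :=
  Submodule.subset_span ⟨[y], by simp, by simp⟩

theorem freeGrading_mul_le (deg : Y → ℤ) (m n : ℤ) :
    freeGrading k Y deg m * freeGrading k Y deg n ≤ freeGrading k Y deg (m + n) := by
  rw [freeGrading, freeGrading, Submodule.span_mul_span]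
  refine Submodule.span_mono ?_
  rintro _ ⟨_, ⟨u, rfl, rfl⟩, _, ⟨v, rfl, rfl⟩, rfl⟩
  exact ⟨u ++ v, by simp, by simp⟩

theorem mem_span_range_list_prod (b : FreeAlgebra k Y) :
    b ∈ Submodule.span k (Set.range fun w : List Y => (w.map (FreeAlgebra.ι k)).prod) := by
  induction b using FreeAlgebra.induction with
  | grade0 r =>
    rw [Algebra.algebraMap_eq_smul_one]
    exact Submodule.smul_mem _ _ (Submodule.subset_span ⟨[], by simp⟩)
  | grade1 y => exact Submodule.subset_span ⟨[y], by simp⟩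
  | mul a b ha hb =>
    have hmul := Submodule.mul_mem_mul ha hb
    rw [Submodule.span_mul_span] at hmul
    refine Submodule.span_mono ?_ hmul
    rintro _ ⟨_, ⟨u, rfl⟩, _, ⟨v, rfl⟩, rfl⟩
    exact ⟨u ++ v, by simp⟩
  | add a b ha hb => exact add_mem ha hb

theorem map_mem_freeGrading {Z : Type} {degY : Y → ℤ} {degZ : Z → ℤ}
    (f : FreeAlgebra k Y →ₐ[k] FreeAlgebra k Z)
    (hf : ∀ y, f (FreeAlgebra.ι k y) ∈ freeGrading k Z degZ (degY y))
    {n : ℤ} {b : FreeAlgebra k Y} (hb : b ∈ freeGrading k Y degY n) :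
    f b ∈ freeGrading k Z degZ n := by
  induction hb using Submodule.span_induction with
  | mem _ hw =>
    obtain ⟨w, rfl, rfl⟩ := hw
    induction w with
    | nil => simpa using one_mem_freeGrading_zero degZ
    | cons y w ih =>
      simp only [List.map_cons, List.prod_cons, map_mul, List.sum_cons]
      exact freeGrading_mul_le degZ _ _ (Submodule.mul_mem_mul (hf y) ih)
  | zero => simp
  | add _ _ _ _ ha hb => simpa using add_mem ha hb
  | smul c _ _ ha => simpa using Submodule.smul_mem _ c ha

end Grading

section Weight

variable {k Y : Type} [Field k] (wt : Y → ℕ)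

def weightPoly : FreeAlgebra k Y →ₐ[k] (FreeAlgebra k Y)[X] :=
  FreeAlgebra.lift k fun y => C (FreeAlgebra.ι k y) * X ^ wt y

@[simp]
theorem weightPoly_ι (y : Y) :
    weightPoly wt (FreeAlgebra.ι k y) = C (FreeAlgebra.ι k y) * X ^ wt y :=
  FreeAlgebra.lift_ι_apply _ _

theorem weightPoly_list_prod (w : List Y) :
    weightPoly wt (w.map (FreeAlgebra.ι k)).prod
      = C (w.map (FreeAlgebra.ι k)).prod * X ^ (w.map wt).sum := by
  induction w with
  | nil => simp
  | cons y w ih =>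
    simp only [List.map_cons, List.prod_cons, map_mul, ih, weightPoly_ι, List.sum_cons,
      pow_add]
    rw [mul_assoc, ← mul_assoc (X ^ wt y), X_pow_mul]
    noncomm_ring

theorem eval_one_weightPoly (b : FreeAlgebra k Y) : (weightPoly wt b).eval 1 = b := by
  induction mem_span_range_list_prod b using Submodule.span_induction with
  | mem _ hw =>
    obtain ⟨w, rfl⟩ := hw
    simp [weightPoly_list_prod]
  | zero => simp
  | add _ _ _ _ ha hb => simp [ha, hb]
  | smul c _ _ ha => simp [eval_smul, ha]

theorem coeff_weightPoly_mem (b : FreeAlgebra k Y) (i : ℕ) :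
    (weightPoly wt b).coeff i ∈ freeGrading k Y (fun y => (wt y : ℤ)) i := by
  induction mem_span_range_list_prod b using Submodule.span_induction with
  | mem _ hw =>
    obtain ⟨w, rfl⟩ := hw
    rw [weightPoly_list_prod, coeff_C_mul_X_pow]
    split_ifs with hi
    · exact Submodule.subset_span ⟨w, rfl, by simp [hi, Nat.cast_list_sum, Function.comp_def]⟩
    · exact zero_mem _
  | zero => simp
  | add _ _ _ _ ha hb => simpa using add_mem ha hb
  | smul c _ _ ha => simpa using Submodule.smul_mem _ c ha

theorem sum_coeff_weightPoly (b : FreeAlgebra k Y) :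
    ∑ i ∈ Finset.range ((weightPoly wt b).natDegree + 1), (weightPoly wt b).coeff i = b := by
  simpa using (eval_eq_sum_range (p := weightPoly wt b) 1).symm.trans (eval_one_weightPoly wt b)

end Weight

section Derivation

variable {k Y : Type} [Field k]

def IsGradedDerivation (deg : Y → ℤ) (d : FreeAlgebra k Y →ₗ[k] FreeAlgebra k Y) : Prop :=
  ∀ (n : ℤ) (a b : FreeAlgebra k Y), a ∈ freeGrading k Y deg n →
    d (a * b) = d a * b + (n.negOnePow : ℤ) • (a * d b)

namespace IsGradedDerivation

variable {deg : Y → ℤ} {d : FreeAlgebra k Y →ₗ[k] FreeAlgebra k Y}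

theorem map_one (hd : IsGradedDerivation deg d) : d 1 = 0 := by
  have h := hd 0 1 1 (one_mem_freeGrading_zero deg)
  simp only [mul_one, Int.negOnePow_zero, Units.val_one, one_smul] at h
  simpa using h

theorem degree_weightPoly_map_list_prod_le (hd : IsGradedDerivation deg d) (wt : Y → ℕ)
    (hgen : ∀ y, (weightPoly wt (d (FreeAlgebra.ι k y))).degree ≤ wt y) (w : List Y) :
    (weightPoly wt (d (w.map (FreeAlgebra.ι k)).prod)).degree ≤ ((w.map wt).sum : ℕ) := by
  induction w with
  | nil => simp [hd.map_one]
  | cons y w ih =>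
    rw [List.map_cons, List.prod_cons, hd _ _ _ (ι_mem_freeGrading deg y), map_add, map_zsmul,
      List.map_cons, List.sum_cons, Nat.cast_add]
    refine (degree_add_le _ _).trans (max_le ?_ ((degree_smul_le _ _).trans ?_))
    · rw [map_mul]
      refine (degree_mul_le _ _).trans (add_le_add (hgen y) ?_)
      rw [weightPoly_list_prod]
      exact degree_C_mul_X_pow_le _ _
    · rw [map_mul, weightPoly_ι]
      exact (degree_mul_le _ _).trans (add_le_add (degree_C_mul_X_pow_le _ _) ih)

theorem degree_weightPoly_map_le_of_mem (hd : IsGradedDerivation deg d) (wt : Y → ℕ)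
    (hgen : ∀ y, (weightPoly wt (d (FreeAlgebra.ι k y))).degree ≤ wt y) {i : ℕ}
    {c : FreeAlgebra k Y} (hc : c ∈ freeGrading k Y (fun y => (wt y : ℤ)) i) :
    (weightPoly wt (d c)).degree ≤ i := by
  induction hc using Submodule.span_induction with
  | mem _ hw =>
    obtain ⟨w, rfl, hw⟩ := hw
    have hsum : (w.map wt).sum = i := by
      rw [← Nat.cast_inj (R := ℤ), Nat.cast_list_sum, List.map_map]
      exact hw
    exact hsum ▸ hd.degree_weightPoly_map_list_prod_le wt hgen w
  | zero => simp
  | add _ _ _ _ ha hb => simpa using (degree_add_le _ _).trans (max_le ha hb)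
  | smul c _ _ ha => simpa using (degree_smul_le c _).trans ha

theorem degree_weightPoly_map_le (hd : IsGradedDerivation deg d) (wt : Y → ℕ)
    (hgen : ∀ y, (weightPoly wt (d (FreeAlgebra.ι k y))).degree ≤ wt y) (b : FreeAlgebra k Y) :
    (weightPoly wt (d b)).degree ≤ (weightPoly wt b).natDegree := by
  conv_lhs => rw [← sum_coeff_weightPoly wt b, map_sum, map_sum]
  refine (degree_sum_le _ _).trans (Finset.sup_le fun i hi => ?_)
  refine (hd.degree_weightPoly_map_le_of_mem wt hgen (coeff_weightPoly_mem wt b i)).trans ?_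
  exact_mod_cast Nat.lt_succ_iff.mp (Finset.mem_range.mp hi)

theorem degree_weightPoly_le_zero_of_map_add_mul_self_eq_zero (hd : IsGradedDerivation deg d)
    (wt : Y → ℕ) (hgen : ∀ y, (weightPoly wt (d (FreeAlgebra.ι k y))).degree ≤ wt y)
    {ξ : FreeAlgebra k Y}    (hξ : d ξ + ξ * ξ = 0) : (weightPoly wt ξ).degree ≤ 0 := by
  set p := weightPoly wt ξ
  by_cases hp : p = 0
  · simp [hp]
  have hsq : weightPoly wt (d ξ) = -(p * p) := by
    rw [eq_neg_iff_add_eq_zero, ← map_mul, ← map_add, hξ, map_zero]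
  have hle : (p * p).natDegree ≤ p.natDegree := by
    rw [← natDegree_neg, ← hsq, natDegree_le_iff_degree_le]
    exact hd.degree_weightPoly_map_le wt hgen ξ
  rw [natDegree_mul hp hp] at hle
  exact natDegree_eq_zero_iff_degree_le_zero.mp (by omega)

end IsGradedDerivation

end Derivation

section Cell

variable {k X Z : Type} [Field k]

def retract : FreeAlgebra k (X ⊕ Z) →ₐ[k] FreeAlgebra k X :=
  FreeAlgebra.lift k (Sum.elim (FreeAlgebra.ι k) 0)

theorem lift_inl_injective :
    Function.Injective
      (FreeAlgebra.lift k (fun x : X => FreeAlgebra.ι k (Sum.inl x : X ⊕ Z))) := by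
  have hcomp : (retract (Z := Z)).comp
      (FreeAlgebra.lift k fun x : X => FreeAlgebra.ι k (Sum.inl x)) = AlgHom.id k _ :=
    FreeAlgebra.hom_ext (funext fun x => by simp [retract])
  exact Function.LeftInverse.injective (g := retract) (AlgHom.congr_fun hcomp)

theorem retract_mem_freeGrading {degX : X → ℤ} {degZ : Z → ℤ} {n : ℤ}
    {b : FreeAlgebra k (X ⊕ Z)} (hb : b ∈ freeGrading k (X ⊕ Z) (Sum.elim degX degZ) n) :
    retract b ∈ freeGrading k X degX n :=
  map_mem_freeGrading retract (by rintro (x | z) <;> simp [retract, ι_mem_freeGrading]) hb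

theorem weightPoly_lift_inl (a : FreeAlgebra k X) :
    weightPoly (Sum.elim 0 1)
      (FreeAlgebra.lift k (fun x : X => FreeAlgebra.ι k (Sum.inl x)) a : FreeAlgebra k (X ⊕ Z))
      = C (FreeAlgebra.lift k (fun x : X => FreeAlgebra.ι k (Sum.inl x)) a) := by
  have hcomp : (weightPoly (Sum.elim 0 1)).comp
      (FreeAlgebra.lift k fun x : X => FreeAlgebra.ι k (Sum.inl x : X ⊕ Z))
      = (CAlgHom).comp (FreeAlgebra.lift k fun x : X => FreeAlgebra.ι k (Sum.inl x)) :=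
    FreeAlgebra.hom_ext (funext fun x => by simp)
  exact AlgHom.congr_fun hcomp a

theorem coeff_zero_weightPoly_eq_lift_inl_retract (b : FreeAlgebra k (X ⊕ Z)) :
    (weightPoly (Sum.elim 0 1) b).coeff 0
      = FreeAlgebra.lift k (fun x : X => FreeAlgebra.ι k (Sum.inl x)) (retract b) := by
  induction b using FreeAlgebra.induction with
  | grade0 r => simp [Polynomial.algebraMap_apply]
  | grade1 y => rcases y with x | z <;> simp [retract, coeff_C]
  | mul a b ha hb => simp [mul_coeff_zero, ha, hb]
  | add a b ha hb => simp [ha, hb]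

end Cell

theorem MC_unchanged_by_adding_a_cell_general
    (k : Type) [Field k]
    (X : Type) (degX : X → ℤ) (degy : ℤ)
    (incl : FreeAlgebra k X →ₐ[k] FreeAlgebra k (X ⊕ Unit))
    (hincl : incl = FreeAlgebra.lift k (fun a : X => FreeAlgebra.ι k (Sum.inl a)))
    (y0 : FreeAlgebra k (X ⊕ Unit)) (hy0 : y0 = FreeAlgebra.ι k (Sum.inr ()))
    -- the differential of A: degree 1, graded derivation, square zero
    (dA : FreeAlgebra k X →ₗ[k] FreeAlgebra k X)
    -- the differential of A⟨y₀⟩ extends dA and sends y₀ into A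
    (dB : FreeAlgebra k (X ⊕ Unit) →ₗ[k] FreeAlgebra k (X ⊕ Unit))
    (hdBA : ∀ a : FreeAlgebra k X, dB (incl a) = incl (dA a))
    (a0 : FreeAlgebra k X) (hdBy : dB y0 = incl a0)
    (hdBder : ∀ (n : ℤ) (a b : FreeAlgebra k (X ⊕ Unit)),
      a ∈ freeGrading k (X ⊕ Unit) (Sum.elim degX fun _ => degy) n →
      dB (a * b) = dB a * b + (n.negOnePow : ℤ) • (a * dB b)) :
    ∀ ξ : FreeAlgebra k (X ⊕ Unit),
      ξ ∈ freeGrading k (X ⊕ Unit) (Sum.elim degX fun _ => degy) 1 →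
      dB ξ + ξ * ξ = 0 →
      ∃ a : FreeAlgebra k X,
        a ∈ freeGrading k X degX 1 ∧ dA a + a * a = 0 ∧ incl a = ξ := by
  intro ξ hξ hMC
  subst hincl hy0
  have hgen : ∀ y, (weightPoly (Sum.elim 0 1) (dB (FreeAlgebra.ι k y))).degree
      ≤ (Sum.elim 0 1 y : ℕ) := by
    rintro (x | ⟨⟩)
    · have hx : FreeAlgebra.ι k (Sum.inl x : X ⊕ Unit)
          = FreeAlgebra.lift k (fun a : X => FreeAlgebra.ι k (Sum.inl a))
              (FreeAlgebra.ι k x) := by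
        simp
      rw [hx, hdBA, weightPoly_lift_inl]
      exact degree_C_le
    · rw [hdBy, weightPoly_lift_inl]
      exact degree_C_le.trans (by simp)
  have hconst :=
    IsGradedDerivation.degree_weightPoly_le_zero_of_map_add_mul_self_eq_zero hdBder _ hgen hMC
  have hξA : FreeAlgebra.lift k (fun a : X => FreeAlgebra.ι k (Sum.inl a)) (retract ξ) = ξ := by
    rw [← coeff_zero_weightPoly_eq_lift_inl_retract]
    conv_rhs =>
      rw [← eval_one_weightPoly (Sum.elim 0 1) ξ, eq_C_of_degree_le_zero hconst, eval_C]
  refine ⟨retract ξ, retract_mem_freeGrading hξ, ?_, hξA⟩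
  apply lift_inl_injective (Z := Unit)
  rw [map_add, map_mul, ← hdBA, hξA, hMC, map_zero]

/-- Let `A` be a free dg associative algebra and `A⟨y₀⟩` the dg
algebra obtained by freely adjoining one generator `y₀` with `d y₀ ∈ A`.  Then
`MC(A⟨y₀⟩) = MC(A)`: every degree 1 element `ξ` of `A⟨y₀⟩` with `dξ + ξ² = 0`
lies in `A` (and is Maurer–Cartan there). -/
theorem MC_unchanged_by_adding_a_cell
    (k : Type) [Field k] [CharZero k]
    (X : Type) (degX : X → ℤ) (degy : ℤ)
    (incl : FreeAlgebra k X →ₐ[k] FreeAlgebra k (X ⊕ Unit))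
    (hincl : incl = FreeAlgebra.lift k (fun a : X => FreeAlgebra.ι k (Sum.inl a)))
    (y0 : FreeAlgebra k (X ⊕ Unit)) (hy0 : y0 = FreeAlgebra.ι k (Sum.inr ()))
    -- the differential of A: degree 1, graded derivation, square zero
    (dA : FreeAlgebra k X →ₗ[k] FreeAlgebra k X)
    (hdAdeg : ∀ (n : ℤ) (a : FreeAlgebra k X), a ∈ freeGrading k X degX n →
      dA a ∈ freeGrading k X degX (n + 1))
    (hdAder : ∀ (n : ℤ) (a b : FreeAlgebra k X), a ∈ freeGrading k X degX n →
      dA (a * b) = dA a * b + (n.negOnePow : ℤ) • (a * dA b))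
    (hdAsq : ∀ a, dA (dA a) = 0)
    -- the differential of A⟨y₀⟩ extends dA and sends y₀ into A
    (dB : FreeAlgebra k (X ⊕ Unit) →ₗ[k] FreeAlgebra k (X ⊕ Unit))
    (hdBA : ∀ a : FreeAlgebra k X, dB (incl a) = incl (dA a))
    (a0 : FreeAlgebra k X) (hdBy : dB y0 = incl a0)
    (hdBdeg : ∀ (n : ℤ) (b : FreeAlgebra k (X ⊕ Unit)),
      b ∈ freeGrading k (X ⊕ Unit) (Sum.elim degX fun _ => degy) n →
      dB b ∈ freeGrading k (X ⊕ Unit) (Sum.elim degX fun _ => degy) (n + 1))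
    (hdBder : ∀ (n : ℤ) (a b : FreeAlgebra k (X ⊕ Unit)),
      a ∈ freeGrading k (X ⊕ Unit) (Sum.elim degX fun _ => degy) n →
      dB (a * b) = dB a * b + (n.negOnePow : ℤ) • (a * dB b))
    (hdBsq : ∀ b, dB (dB b) = 0) :
    ∀ ξ : FreeAlgebra k (X ⊕ Unit),
      ξ ∈ freeGrading k (X ⊕ Unit) (Sum.elim degX fun _ => degy) 1 →
      dB ξ + ξ * ξ = 0 →
      ∃ a : FreeAlgebra k X,
        a ∈ freeGrading k X degX 1 ∧ dA a + a * a = 0 ∧ incl a = ξ :=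
  MC_unchanged_by_adding_a_cell_general k X degX degy incl hincl y0 hy0 dA dB hdBA a0 hdBy hdBder
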